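/- arXiv:1510.00285 — 2 statements merged into one kernel-verified Lean document; each statement's English description precedes it below -/
import Mathlib

section
/- Let L, L′, L″ be complex Lie algebras admitting bases e₁,…,e₅, f₁,…,f₅, g₁,…,g₅ respectively, whose only nonzero brackets among basis vectors (up to antisymmetry) are: in L: [e₂,e₄]=e₁, [e₃,e₄]=e₂, [e₃,e₅]=e₁; in L′: [f₃,f₄]=f₂, [f₁,f₅]=f₂, [f₃,f₅]=f₁+f₄; in L″: [g₃,g₄]=g₂, [g₁,g₅]=g₂, [g₃,g₅]=g₁. Then L, L′ and L″ are pairwise isomorphic as Lie algebras over ℂ. -/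
/-!
The three algebras are related by explicit changes of basis. In `L''` the vectors
`g₂, g₁ + g₂, g₃, g₄ + g₅, g₄` satisfy the brackets of `L`, and in `L'` the vectors
`f₁ + f₄, f₂, f₃ + f₅, f₄, f₅` satisfy those of `L''`; both families span, hence are bases.
Two Lie algebras with bases of equal structure constants are isomorphic, via the linear map
matching the bases, since a bilinear map is determined by its values on pairs of basis vectors.
Indices of `Fin 5` start at `0`, so `g₂` is `g 1`.
-/

/-- `Realizes L c` means that the complex Lie algebra `L` admits a basis `e₁, …, e₅`
(indexed by `Fin 5`) in which the brackets of basis vectors are given by the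
structure constants `c`, i.e. `⁅eᵢ, eⱼ⁆ = ∑ₖ c i j k • eₖ` for all `i < j`,
all brackets of basis vectors being determined by these via antisymmetry. -/
def Realizes (L : Type) [LieRing L] [LieAlgebra ℂ L]
    (c : Fin 5 → Fin 5 → Fin 5 → ℂ) : Prop :=
  ∃ e : Module.Basis (Fin 5) ℂ L, ∀ i j : Fin 5, i < j →
    ⁅e i, e j⁆ = ∑ k, c i j k • e k

/-- The nilpotent pattern `d₅(0:0:0)`: `[e₂,e₄]=e₁`, `[e₃,e₄]=e₂`, `[e₃,e₅]=e₁`. -/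
def patternL : Fin 5 → Fin 5 → Fin 5 → ℂ := fun i j =>
  if i = 1 ∧ j = 3 then ![1, 0, 0, 0, 0]
  else if i = 2 ∧ j = 3 then ![0, 1, 0, 0, 0]
  else if i = 2 ∧ j = 4 then ![1, 0, 0, 0, 0]
  else 0

/-- The nilpotent pattern `d₁₄(0:0)`: `[f₃,f₄]=f₂`, `[f₁,f₅]=f₂`, `[f₃,f₅]=f₁+f₄`. -/
def patternL' : Fin 5 → Fin 5 → Fin 5 → ℂ := fun i j =>
  if i = 2 ∧ j = 3 then ![0, 1, 0, 0, 0]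
  else if i = 0 ∧ j = 4 then ![0, 1, 0, 0, 0]
  else if i = 2 ∧ j = 4 then ![1, 0, 0, 1, 0]
  else 0

/-- The nilpotent pattern `d₁₅(0:0)`: `[g₃,g₄]=g₂`, `[g₁,g₅]=g₂`, `[g₃,g₅]=g₁`. -/
def patternL'' : Fin 5 → Fin 5 → Fin 5 → ℂ := fun i j =>
  if i = 2 ∧ j = 3 then ![0, 1, 0, 0, 0]
  else if i = 0 ∧ j = 4 then ![0, 1, 0, 0, 0]
  else if i = 2 ∧ j = 4 then ![1, 0, 0, 0, 0]
  else 0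

open Module Submodule

section StructureConstants

variable {ι R L : Type*} [LinearOrder ι] [Fintype ι] [CommRing R] [LieRing L] [LieAlgebra R L]

def skewExtend (c : ι → ι → ι → R) (i j : ι) : ι → R :=
  if i < j then c i j else if j < i then -c j i else 0

lemma lie_eq_sum_skewExtend {c : ι → ι → ι → R} {e : ι → L}
    (he : ∀ i j, i < j → ⁅e i, e j⁆ = ∑ k, c i j k • e k) (i j : ι) :
    ⁅e i, e j⁆ = ∑ k, skewExtend c i j k • e k := by
  rcases lt_trichotomy i j with h | rfl | h
  · simp [skewExtend, h, he i j h]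
  · simp [skewExtend]
  · rw [← lie_skew, he j i h]
    simp [skewExtend, h, h.not_gt]

end StructureConstants

lemma LinearMap.map_lie_of_basis {ι R L M : Type*} [CommRing R] [LieRing L] [LieAlgebra R L]
    [LieRing M] [LieAlgebra R M] (f : L →ₗ[R] M) (b : Basis ι R L)
    (h : ∀ i j, f ⁅b i, b j⁆ = ⁅f (b i), f (b j)⁆) (x y : L) : f ⁅x, y⁆ = ⁅f x, f y⁆ := by
  have : ((LieModule.toEnd R L L : L →ₗ[R] L →ₗ[R] L)).compr₂ f =
      (LieModule.toEnd R M M : M →ₗ[R] M →ₗ[R] M).compl₁₂ f f :=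
    b.ext fun i => b.ext fun j => by simpa using h i j
  simpa using LinearMap.congr_fun₂ this x y

section Realizes

variable {L : Type} [LieRing L] [LieAlgebra ℂ L] {c : Fin 5 → Fin 5 → Fin 5 → ℂ}

lemma Realizes.finrank_eq (h : Realizes L c) : finrank ℂ L = 5 := by
  obtain ⟨e, -⟩ := h
  simpa using finrank_eq_card_basis e

lemma Realizes.of_top_le_span (v : Fin 5 → L) (hspan : ⊤ ≤ span ℂ (Set.range v))
    (hdim : finrank ℂ L = 5) (hv : ∀ i j, i < j → ⁅v i, v j⁆ = ∑ k, c i j k • v k) :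
    Realizes L c :=
  ⟨basisOfTopLeSpanOfCardEqFinrank v hspan (by simp [hdim]), by simpa using hv⟩

lemma Realizes.nonempty_lieEquiv {M : Type} [LieRing M] [LieAlgebra ℂ M] (hL : Realizes L c)
    (hM : Realizes M c) : Nonempty (L ≃ₗ⁅ℂ⁆ M) := by
  obtain ⟨e, he⟩ := hL
  obtain ⟨f, hf⟩ := hM
  let φ : L ≃ₗ[ℂ] M := e.equiv f (Equiv.refl _)
  have hφ (i j) : φ ⁅e i, e j⁆ = ⁅φ (e i), φ (e j)⁆ := by
    simp [φ, lie_eq_sum_skewExtend he, lie_eq_sum_skewExtend hf]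
  exact ⟨{ φ with map_lie' := φ.toLinearMap.map_lie_of_basis e hφ _ _ }⟩

lemma realizes_patternL_of_patternL'' (h : Realizes L patternL'') : Realizes L patternL := by
  obtain ⟨g, hg⟩ := h
  refine .of_top_le_span ![g 1, g 0 + g 1, g 2, g 3 + g 4, g 3] ?_ (Realizes.finrank_eq ⟨g, hg⟩) ?_
  · rw [← g.span_eq, span_le, Set.range_subset_iff]
    intro i
    simp only [SetLike.mem_coe, mem_span_range_iff_exists_fun]
    fin_cases i
    · exact ⟨![-1, 1, 0, 0, 0], by simp [Fin.sum_univ_five]⟩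
    · exact ⟨![1, 0, 0, 0, 0], by simp [Fin.sum_univ_five]⟩
    · exact ⟨![0, 0, 1, 0, 0], by simp [Fin.sum_univ_five]⟩
    · exact ⟨![0, 0, 0, 0, 1], by simp [Fin.sum_univ_five]⟩
    · exact ⟨![0, 0, 0, 1, -1], by simp [Fin.sum_univ_five]⟩
  · intro i j hij
    fin_cases i <;> fin_cases j <;> simp at hij <;>
      simp [lie_eq_sum_skewExtend hg, skewExtend, patternL'', patternL, Fin.sum_univ_five,
        lie_add, add_lie, add_comm]

lemma realizes_patternL''_of_patternL' (h : Realizes L patternL') : Realizes L patternL'' := by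
  obtain ⟨f, hf⟩ := h
  refine .of_top_le_span ![f 0 + f 3, f 1, f 2 + f 4, f 3, f 4] ?_ (Realizes.finrank_eq ⟨f, hf⟩) ?_
  · rw [← f.span_eq, span_le, Set.range_subset_iff]
    intro i
    simp only [SetLike.mem_coe, mem_span_range_iff_exists_fun]
    fin_cases i
    · exact ⟨![1, 0, 0, -1, 0], by simp [Fin.sum_univ_five]⟩
    · exact ⟨![0, 1, 0, 0, 0], by simp [Fin.sum_univ_five]⟩
    · exact ⟨![0, 0, 1, 0, -1], by simp [Fin.sum_univ_five]⟩
    · exact ⟨![0, 0, 0, 1, 0], by simp [Fin.sum_univ_five]⟩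
    · exact ⟨![0, 0, 0, 0, 1], by simp [Fin.sum_univ_five]⟩
  · intro i j hij
    fin_cases i <;> fin_cases j <;> simp at hij <;>
      simp [lie_eq_sum_skewExtend hf, skewExtend, patternL', patternL'', Fin.sum_univ_five,
        lie_add, add_lie]

end Realizes

/-- The three nilpotent 5-dimensional complex Lie algebras `d₅(0:0:0)`,
`d₁₄(0:0)` and `d₁₅(0:0)` are pairwise isomorphic. -/
theorem d5_d14_d15_generic_iso
    (L L' L'' : Type) [LieRing L] [LieAlgebra ℂ L] [LieRing L'] [LieAlgebra ℂ L']
    [LieRing L''] [LieAlgebra ℂ L'']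
    (hL : Realizes L patternL) (hL' : Realizes L' patternL') (hL'' : Realizes L'' patternL'') :
    Nonempty (L ≃ₗ⁅ℂ⁆ L') ∧ Nonempty (L' ≃ₗ⁅ℂ⁆ L'') ∧ Nonempty (L ≃ₗ⁅ℂ⁆ L'') := by
  have hL'_d5 : Realizes L' patternL :=
    realizes_patternL_of_patternL'' (realizes_patternL''_of_patternL' hL')
  have hL''_d5 : Realizes L'' patternL := realizes_patternL_of_patternL'' hL''
  exact ⟨hL.nonempty_lieEquiv hL'_d5, hL'_d5.nonempty_lieEquiv hL''_d5, hL.nonempty_lieEquiv hL''_d5⟩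
end

section
/- Define maps σ, τ : ℂ³ → ℂ³ by σ(p,q,r) = (r(p−q)², p(p−q)(r−q), p(r−q)²) and τ(p,q,r) = (r(p−q)², −q(p−q)(r−q), p(r−q)²). Then for all p, q, r ∈ ℂ that are nonzero, pairwise distinct, and satisfy pr ≠ q²: (1) there is a nonzero c ∈ ℂ with σ(σ(σ(p,q,r))) = c·(p,q,r); (2) there is a nonzero c′ ∈ ℂ with τ(τ(p,q,r)) = c′·(p,q,r); (3) there is a nonzero c″ ∈ ℂ with σ(τ(p,q,r)) = c″·τ(σ(σ(p,q,r))). (That is, on the complement of the divisor {p=0, q=0, r=0, p=q, p=r, q=r, pr=q²} in ℙ², σ has order 3, τ has order 2, and στ = τσ², so σ and τ generate a group of projective transformations isomorphic to the symmetric group Σ₃.) -/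
/-- The polynomial representative `σ(p,q,r) = (r(p−q)², p(p−q)(r−q), p(r−q)²)` of a rational
self-map of `ℙ²(ℂ)`. -/
def sigmaMap (v : ℂ × ℂ × ℂ) : ℂ × ℂ × ℂ :=
  (v.2.2 * (v.1 - v.2.1) ^ 2, v.1 * (v.1 - v.2.1) * (v.2.2 - v.2.1), v.1 * (v.2.2 - v.2.1) ^ 2)

/-- The polynomial representative `τ(p,q,r) = (r(p−q)², −q(p−q)(r−q), p(r−q)²)` of a rational
self-map of `ℙ²(ℂ)`. -/
def tauMap (v : ℂ × ℂ × ℂ) : ℂ × ℂ × ℂ :=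
  (v.2.2 * (v.1 - v.2.1) ^ 2, -v.2.1 * (v.1 - v.2.1) * (v.2.2 - v.2.1), v.1 * (v.2.2 - v.2.1) ^ 2)

set_option maxHeartbeats 4000000 in
/-- `σ³` is a scalar multiple of the identity (polynomial identity, no hypotheses needed). -/
lemma sigma_cubed (p q r : ℂ) :
    sigmaMap (sigmaMap (sigmaMap (p, q, r))) =
      (p ^ 3 * q ^ 2 * r * (p - q) ^ 6 * (r - q) ^ 4 * (p - r) ^ 6 * (p * r - q ^ 2) ^ 2) •
        ((p, q, r) : ℂ × ℂ × ℂ) := by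
  simp only [sigmaMap, Prod.smul_mk, smul_eq_mul, Prod.mk.injEq]
  refine ⟨by ring, by ring, by ring⟩

set_option maxHeartbeats 4000000 in
/-- `τ²` is a scalar multiple of the identity (polynomial identity, no hypotheses needed). -/
lemma tau_squared (p q r : ℂ) :
    tauMap (tauMap (p, q, r)) =
      ((p - q) ^ 2 * (r - q) ^ 2 * (p * r - q ^ 2) ^ 2) • ((p, q, r) : ℂ × ℂ × ℂ) := by
  simp only [tauMap, Prod.smul_mk, smul_eq_mul, Prod.mk.injEq]
  refine ⟨by ring, by ring, by ring⟩

set_option maxHeartbeats 4000000 in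
/-- The polynomial identity underlying `στ = τσ²` projectively. -/
lemma sigma_tau_comm (p q r : ℂ) :
    (p ^ 3 * q ^ 2 * r * (p - q) ^ 4 * (r - q) ^ 2 * (p - r) ^ 6) •
        sigmaMap (tauMap (p, q, r)) = tauMap (sigmaMap (sigmaMap (p, q, r))) := by
  simp only [sigmaMap, tauMap, Prod.smul_mk, smul_eq_mul, Prod.mk.injEq]
  refine ⟨by ring, by ring, by ring⟩

set_option maxHeartbeats 1600000 in
/-- On the complement of the divisor `{p=0, q=0, r=0, p=q, p=r, q=r, pr=q²}`
of `ℙ²`, the map `σ` has order 3, `τ` has order 2, and `στ = τσ²` projectively (equality of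
points of `ℙ²` being equality in `ℂ³` up to a nonzero scalar), so that `σ` and `τ` generate a
group of projective transformations isomorphic to `Σ₃`. -/
theorem sigma_tau_generate_S3 (p q r : ℂ) (hp : p ≠ 0) (hq : q ≠ 0) (hr : r ≠ 0)
    (hpq : p ≠ q) (hpr : p ≠ r) (hqr : q ≠ r) (hprq : p * r ≠ q ^ 2) :
    (∃ c : ℂ, c ≠ 0 ∧ sigmaMap (sigmaMap (sigmaMap (p, q, r))) = c • ((p, q, r) : ℂ × ℂ × ℂ)) ∧
    (∃ c' : ℂ, c' ≠ 0 ∧ tauMap (tauMap (p, q, r)) = c' • ((p, q, r) : ℂ × ℂ × ℂ)) ∧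
    (∃ c'' : ℂ, c'' ≠ 0 ∧
      sigmaMap (tauMap (p, q, r)) = c'' • tauMap (sigmaMap (sigmaMap (p, q, r)))) := by
  have h1 : p - q ≠ 0 := sub_ne_zero.mpr hpq
  have h2 : r - q ≠ 0 := sub_ne_zero.mpr (Ne.symm hqr)
  have h3 : p - r ≠ 0 := sub_ne_zero.mpr hpr
  have h4 : p * r - q ^ 2 ≠ 0 := sub_ne_zero.mpr hprq
  have hd : p ^ 3 * q ^ 2 * r * (p - q) ^ 4 * (r - q) ^ 2 * (p - r) ^ 6 ≠ 0 :=
    mul_ne_zero (mul_ne_zero (mul_ne_zero (mul_ne_zero (mul_ne_zero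
      (pow_ne_zero _ hp) (pow_ne_zero _ hq)) hr) (pow_ne_zero _ h1))
      (pow_ne_zero _ h2)) (pow_ne_zero _ h3)
  refine ⟨⟨p ^ 3 * q ^ 2 * r * (p - q) ^ 6 * (r - q) ^ 4 * (p - r) ^ 6 * (p * r - q ^ 2) ^ 2,
      mul_ne_zero (mul_ne_zero (mul_ne_zero (mul_ne_zero (mul_ne_zero (mul_ne_zero
        (pow_ne_zero _ hp) (pow_ne_zero _ hq)) hr) (pow_ne_zero _ h1)) (pow_ne_zero _ h2))
        (pow_ne_zero _ h3)) (pow_ne_zero _ h4), sigma_cubed p q r⟩,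
    ⟨(p - q) ^ 2 * (r - q) ^ 2 * (p * r - q ^ 2) ^ 2,
      mul_ne_zero (mul_ne_zero (pow_ne_zero _ h1) (pow_ne_zero _ h2)) (pow_ne_zero _ h4),
      tau_squared p q r⟩,
    ⟨(p ^ 3 * q ^ 2 * r * (p - q) ^ 4 * (r - q) ^ 2 * (p - r) ^ 6)⁻¹,
      inv_ne_zero hd, ?_⟩⟩
  rw [← sigma_tau_comm p q r, smul_smul, inv_mul_cancel₀ hd, one_smul]
end
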